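/- arXiv:1310.4404 — 2 statements merged into one kernel-verified Lean document; each statement's English description precedes it below -/
import Mathlib

section
/- Let M and N be smooth manifolds, let u : (0,∞) × M → N be a smooth map, and let P ⊆ M × N be a set (regarded as a property of values of u) such that for every compact set K ⊆ M there exists ε_K > 0 with (p, u(ε,p)) ∈ P for all p ∈ K and all 0 < ε < ε_K. Then there exists a smooth map ũ : (0,∞) × M → N such that (p, ũ(ε,p)) ∈ P for all ε > 0 and all p ∈ M, and such that for every compact set K ⊆ M there exists ε_K > 0 with ũ(ε,p) = u(ε,p) for all p ∈ K and all 0 < ε ≤ ε_K. -/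
open Set Filter Topology Manifold

/-- Auxiliary reparametrisation: a smooth function equal to `t` for `t ≤ 1/2`,
positive for `t > 0` and `< 1` for `t > 0`. -/
noncomputable def egsPhi (t : ℝ) : ℝ :=
  (1 - Real.smoothTransition (2 * t - 1)) * t + Real.smoothTransition (2 * t - 1) * (3 / 4)

lemma egsPhi_contDiff {n : ℕ∞} : ContDiff ℝ n egsPhi := by
  have h2 : ContDiff ℝ n fun t : ℝ => 2 * t - 1 := by fun_prop
  exact ((contDiff_const.sub (Real.smoothTransition.contDiff.comp h2)).mul contDiff_id).add
    ((Real.smoothTransition.contDiff.comp h2).mul contDiff_const)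

lemma egsPhi_pos {t : ℝ} (h : 0 < t) : 0 < egsPhi t := by
  have h0 := Real.smoothTransition.nonneg (2 * t - 1)
  have h1 := Real.smoothTransition.le_one (2 * t - 1)
  unfold egsPhi
  rcases lt_or_ge (Real.smoothTransition (2 * t - 1)) 1 with hs | hs
  · nlinarith [mul_pos (sub_pos.2 hs) h, mul_nonneg h0 (by norm_num : (0:ℝ) ≤ 3 / 4)]
  · have he : Real.smoothTransition (2 * t - 1) = 1 := le_antisymm h1 hs
    rw [he]; norm_num

lemma egsPhi_lt_one {t : ℝ} (h : 0 < t) : egsPhi t < 1 := by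
  have h0 := Real.smoothTransition.nonneg (2 * t - 1)
  have h1 := Real.smoothTransition.le_one (2 * t - 1)
  rcases lt_or_ge t 1 with ht | ht
  · rcases eq_or_lt_of_le h0 with hs | hs
    · unfold egsPhi; rw [← hs]; simpa using ht
    · unfold egsPhi; nlinarith
  · have hs : Real.smoothTransition (2 * t - 1) = 1 :=
      Real.smoothTransition.one_of_one_le (by linarith)
    unfold egsPhi; rw [hs]; norm_num

lemma egsPhi_eq {t : ℝ} (h : t ≤ 1 / 2) : egsPhi t = t := by
  have hs : Real.smoothTransition (2 * t - 1) = 0 :=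
    Real.smoothTransition.zero_of_nonpos (by linarith)
  unfold egsPhi; rw [hs]; ring

/-- Globalisation lemma: if `u : (0,∞) × M → N` is smooth and for every
compact `K ⊆ M` there is `ε_K > 0` such that `(p, u ε p) ∈ P` for all `p ∈ K` and
`0 < ε < ε_K`, then there is a smooth `v : (0,∞) × M → N` with `(p, v ε p) ∈ P` for all
`ε > 0`, `p ∈ M`, and such that on every compact `K ⊆ M` one has `v ε p = u ε p` for all
sufficiently small `ε > 0`. -/
theorem exists_global_smooth_modification
    {E : Type*} [NormedAddCommGroup E] [NormedSpace ℝ E] [FiniteDimensional ℝ E]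
    {H : Type*} [TopologicalSpace H] {I : ModelWithCorners ℝ E H} [I.Boundaryless]
    {M : Type*} [TopologicalSpace M] [ChartedSpace H M] [IsManifold I (⊤ : ℕ∞) M]
    [T2Space M] [SecondCountableTopology M]
    {F : Type*} [NormedAddCommGroup F] [NormedSpace ℝ F] [FiniteDimensional ℝ F]
    {G : Type*} [TopologicalSpace G] {J : ModelWithCorners ℝ F G} [J.Boundaryless]
    {N : Type*} [TopologicalSpace N] [ChartedSpace G N] [IsManifold J (⊤ : ℕ∞) N]
    [T2Space N] [SecondCountableTopology N]
    (u : ℝ → M → N)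
    (hu : ContMDiffOn (𝓘(ℝ, ℝ).prod I) J (⊤ : ℕ∞) (fun q : ℝ × M => u q.1 q.2)
      (Ioi (0 : ℝ) ×ˢ univ))
    (P : Set (M × N))
    (hP : ∀ K : Set M, IsCompact K → ∃ εK > (0 : ℝ),
      ∀ p ∈ K, ∀ ε : ℝ, 0 < ε → ε < εK → (p, u ε p) ∈ P) :
    ∃ v : ℝ → M → N,
      ContMDiffOn (𝓘(ℝ, ℝ).prod I) J (⊤ : ℕ∞) (fun q : ℝ × M => v q.1 q.2)
        (Ioi (0 : ℝ) ×ˢ univ) ∧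
      (∀ ε : ℝ, 0 < ε → ∀ p : M, (p, v ε p) ∈ P) ∧
      ∀ K : Set M, IsCompact K → ∃ εK > (0 : ℝ),
        ∀ p ∈ K, ∀ ε : ℝ, 0 < ε → ε ≤ εK → v ε p = u ε p := by
  haveI : LocallyCompactSpace M := Manifold.locallyCompact_of_finiteDimensional I
  haveI : SigmaCompactSpace M := inferInstance
  -- family of convex sets
  set t : M → Set ℝ := fun x =>
    {y : ℝ | 0 < y ∧ ∀ ε : ℝ, 0 < ε → ε < y → (x, u ε x) ∈ P} with ht_def
  have hconv : ∀ x, Convex ℝ (t x) := by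
    intro x a ha b hb p q hp hq hpq
    simp only [smul_eq_mul]
    have hmn : (0 : ℝ) < min a b := lt_min ha.1 hb.1
    have l1 : p * min a b ≤ p * a := mul_le_mul_of_nonneg_left (min_le_left a b) hp
    have l2 : q * min a b ≤ q * b := mul_le_mul_of_nonneg_left (min_le_right a b) hq
    have l3 : p * min a b + q * min a b = min a b := by rw [← add_mul, hpq, one_mul]
    have r1 : p * a ≤ p * max a b := mul_le_mul_of_nonneg_left (le_max_left a b) hp
    have r2 : q * b ≤ q * max a b := mul_le_mul_of_nonneg_left (le_max_right a b) hq
    have r3 : p * max a b + q * max a b = max a b := by rw [← add_mul, hpq, one_mul]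
    refine ⟨by linarith, fun ε hε hlt => ?_⟩
    have hle : p * a + q * b ≤ max a b := by linarith
    rcases le_total a b with hab | hab
    · exact hb.2 ε hε (lt_of_lt_of_le hlt (by rwa [max_eq_right hab] at hle))
    · exact ha.2 ε hε (lt_of_lt_of_le hlt (by rwa [max_eq_left hab] at hle))
  have hloc : ∀ x : M, ∃ c : ℝ, ∀ᶠ y in 𝓝 x, c ∈ t y := by
    intro x
    obtain ⟨K, hK, hKx⟩ := exists_compact_mem_nhds x
    obtain ⟨εK, hεK, hKP⟩ := hP K hK
    refine ⟨εK, ?_⟩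
    filter_upwards [hKx] with y hy
    exact ⟨hεK, fun ε hε hlt => hKP y hy ε hε hlt⟩
  obtain ⟨δ, hδ⟩ := exists_contMDiffMap_forall_mem_convex_of_local_const I (n := (⊤ : ℕ∞)) hconv hloc
  have hδpos : ∀ x, 0 < δ x := fun x => (hδ x).1
  -- reparametrised time
  set w : ℝ → M → ℝ := fun ε p => δ p * egsPhi (ε / δ p) with hw_def
  have hwpos : ∀ (ε : ℝ), 0 < ε → ∀ p, 0 < w ε p := fun ε hε p =>
    mul_pos (hδpos p) (egsPhi_pos (div_pos hε (hδpos p)))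
  have hwlt : ∀ (ε : ℝ), 0 < ε → ∀ p, w ε p < δ p := by
    intro ε hε p
    have := egsPhi_lt_one (div_pos hε (hδpos p))
    calc w ε p < δ p * 1 := by
          exact mul_lt_mul_of_pos_left this (hδpos p)
      _ = δ p := mul_one _
  have hweq : ∀ (ε : ℝ), ∀ p, ε ≤ δ p / 2 → w ε p = ε := by
    intro ε p h
    have hne : δ p ≠ 0 := (hδpos p).ne'
    have : ε / δ p ≤ 1 / 2 := by
      rw [div_le_div_iff₀ (hδpos p) two_pos]; linarith
    show δ p * egsPhi (ε / δ p) = ε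
    rw [egsPhi_eq this]
    field_simp
  refine ⟨fun ε p => u (w ε p) p, ?_, ?_, ?_⟩
  · -- smoothness
    have hδsm : ContMDiff I 𝓘(ℝ, ℝ) (⊤ : ℕ∞) δ := δ.contMDiff
    have h1 : ContMDiff (𝓘(ℝ, ℝ).prod I) 𝓘(ℝ, ℝ) (⊤ : ℕ∞) (fun q : ℝ × M => δ q.2) :=
      hδsm.comp contMDiff_snd
    have h2 : ContMDiff (𝓘(ℝ, ℝ).prod I) 𝓘(ℝ, ℝ) (⊤ : ℕ∞) (fun q : ℝ × M => q.1 / δ q.2) :=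
      ContMDiff.div₀ contMDiff_fst h1 (fun q => (hδpos q.2).ne')
    have h3 : ContMDiff (𝓘(ℝ, ℝ).prod I) 𝓘(ℝ, ℝ) (⊤ : ℕ∞) (fun q : ℝ × M => egsPhi (q.1 / δ q.2)) :=
      egsPhi_contDiff.contMDiff.comp h2
    have h4 : ContMDiff (𝓘(ℝ, ℝ).prod I) 𝓘(ℝ, ℝ) (⊤ : ℕ∞) (fun q : ℝ × M => w q.1 q.2) := h1.mul h3
    have hΦ : ContMDiff (𝓘(ℝ, ℝ).prod I) (𝓘(ℝ, ℝ).prod I) (⊤ : ℕ∞)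
        (fun q : ℝ × M => ((w q.1 q.2, q.2) : ℝ × M)) := h4.prodMk contMDiff_snd
    have hmaps : MapsTo (fun q : ℝ × M => ((w q.1 q.2, q.2) : ℝ × M))
        (Ioi (0 : ℝ) ×ˢ univ) (Ioi (0 : ℝ) ×ˢ univ) := by
      rintro ⟨ε, p⟩ ⟨hε, -⟩
      exact ⟨hwpos ε hε p, mem_univ _⟩
    exact hu.comp (hΦ.contMDiffOn) hmaps
  · intro ε hε p
    exact (hδ p).2 (w ε p) (hwpos ε hε p) (hwlt ε hε p)
  · intro K hK
    rcases K.eq_empty_or_nonempty with rfl | hne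
    · exact ⟨1, one_pos, by simp⟩
    · obtain ⟨x0, hx0, hmin⟩ := hK.exists_isMinOn hne (δ.contMDiff.continuous.continuousOn (s := K))
      refine ⟨δ x0 / 2, by linarith [hδpos x0], fun p hp ε hε hle => ?_⟩
      have h5 : δ x0 ≤ δ p := hmin hp
      have h6 : ε ≤ δ p / 2 := by linarith
      show u (w ε p) p = u ε p
      rw [hweq ε p h6]
end

section
/- Let X and Y be metric spaces, let f : X → Y be continuous and injective, and let f_k : X → Y (k ∈ ℕ) be maps converging to f uniformly on every compact subset of X. Let V ⊆ f(X) and for each k let g_k : V → X be a map satisfying f_k(g_k(q)) = q for all q ∈ V. If the union over k of the sets g_k(V) is contained in a compact subset of X, then the maps g_k converge, uniformly on every compact subset of V, to the map sending q ∈ V to the unique x ∈ X with f(x) = q. -/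
open Set Filter Topology

/-- Convergence of inverses: if `f : X → Y` is continuous and injective,
`fₖ → f` uniformly on compact subsets of `X`, `V ⊆ f(X)`, each `gₖ : V → X` is a right
inverse of `fₖ` on `V`, and `⋃ₖ gₖ(V)` is contained in a compact subset of `X`, then the
`gₖ` converge, uniformly on every compact subset of `V`, to the map sending `q ∈ V` to
the unique `x ∈ X` with `f x = q`. -/
theorem inverses_converge_locally_uniformly {X Y : Type*} [MetricSpace X] [MetricSpace Y]
    (f : X → Y) (hf : Continuous f) (hinj : Function.Injective f)
    (fk : ℕ → X → Y)
    (hconv : ∀ K : Set X, IsCompact K → TendstoUniformlyOn (fun k => fk k) f atTop K)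
    (V : Set Y) (hV : V ⊆ range f)
    (gk : ℕ → Y → X) (hgk : ∀ k, ∀ q ∈ V, fk k (gk k q) = q)
    (C : Set X) (hC : IsCompact C) (hCg : ∀ k, gk k '' V ⊆ C) :
    ∃ glim : Y → X, (∀ q ∈ V, f (glim q) = q) ∧
      ∀ K ⊆ V, IsCompact K → TendstoUniformlyOn gk glim atTop K := by
  classical
  set glim : Y → X := fun q => if h : ∃ x, f x = q then h.choose else gk 0 q with hglim_def
  have hglim : ∀ q ∈ V, f (glim q) = q := by
    intro q hq
    have h : ∃ x, f x = q := hV hq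
    simp only [hglim_def, dif_pos h]
    exact h.choose_spec
  -- key limit lemma
  have key : ∀ (m : ℕ → ℕ) (x : ℕ → X) (qs : ℕ → Y) (x0 : X) (q0 : Y),
      Tendsto m atTop atTop → (∀ n, x n ∈ C) → Tendsto x atTop (𝓝 x0) →
      (∀ n, fk (m n) (x n) = qs n) → Tendsto qs atTop (𝓝 q0) → f x0 = q0 := by
    intro m x qs x0 q0 hm hxC hx heq hqs
    have h1 : Tendsto (fun n => dist (f (x n)) (fk (m n) (x n))) atTop (𝓝 0) := by
      rw [Metric.tendsto_nhds]
      intro ε hε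
      have h := (Metric.tendstoUniformlyOn_iff.mp (hconv C hC)) ε hε
      filter_upwards [hm.eventually h] with n hn
      have := hn (x n) (hxC n)
      rwa [Real.dist_0_eq_abs, abs_of_nonneg dist_nonneg]
    have h2 : Tendsto (fun n => dist (f (x n)) (f x0)) atTop (𝓝 0) := by
      exact tendsto_iff_dist_tendsto_zero.mp ((hf.tendsto x0).comp hx)
    have h3 : Tendsto (fun n => fk (m n) (x n)) atTop (𝓝 (f x0)) := by
      rw [tendsto_iff_dist_tendsto_zero]
      have hb : ∀ n, dist (fk (m n) (x n)) (f x0) ≤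
          dist (f (x n)) (fk (m n) (x n)) + dist (f (x n)) (f x0) := by
        intro n
        calc dist (fk (m n) (x n)) (f x0)
            ≤ dist (fk (m n) (x n)) (f (x n)) + dist (f (x n)) (f x0) := dist_triangle _ _ _
          _ = dist (f (x n)) (fk (m n) (x n)) + dist (f (x n)) (f x0) := by rw [dist_comm]
      have := h1.add h2
      simpa using squeeze_zero (fun n => dist_nonneg) hb (by simpa using this)
    have h4 : Tendsto qs atTop (𝓝 (f x0)) := h3.congr heq
    exact tendsto_nhds_unique h4 hqs
  -- glim maps V into C
  have hglimC : ∀ q ∈ V, glim q ∈ C := by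
    intro q hq
    have hxC : ∀ n : ℕ, gk n q ∈ C := fun n => hCg n ⟨q, hq, rfl⟩
    obtain ⟨z, hzC, ψ, hψ, hz⟩ := hC.tendsto_subseq hxC
    have hfz : f z = q :=
      key ψ (fun n => gk (ψ n) q) (fun _ => q) z q hψ.tendsto_atTop
        (fun n => hxC (ψ n)) hz (fun n => hgk (ψ n) q hq) tendsto_const_nhds
    have : glim q = z := hinj (by rw [hglim q hq, hfz])
    rwa [this]
  refine ⟨glim, hglim, ?_⟩
  intro K hKV hK
  rw [Metric.tendstoUniformlyOn_iff]
  by_contra hcon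
  push_neg at hcon
  obtain ⟨ε, hε, hfreq⟩ := hcon
  have hfreq' : ∃ᶠ k in atTop, ∃ x ∈ K, ε ≤ dist (glim x) (gk k x) := by
    refine hfreq.mono ?_
    intro k hk
    exact hk
  obtain ⟨φ, hφ, hP⟩ := Filter.extraction_of_frequently_atTop hfreq'
  choose q hqK hqd using hP
  -- q n ∈ K, extract convergent subsequence
  obtain ⟨q0, hq0K, ψ1, hψ1, hq⟩ := hK.tendsto_subseq hqK
  have hqV : ∀ n, q (ψ1 n) ∈ V := fun n => hKV (hqK (ψ1 n))
  have hxC : ∀ n, gk (φ (ψ1 n)) (q (ψ1 n)) ∈ C := fun n => hCg _ ⟨q (ψ1 n), hqV n, rfl⟩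
  obtain ⟨x0, hx0C, ψ2, hψ2, hx⟩ := hC.tendsto_subseq hxC
  have hyC : ∀ n, glim (q (ψ1 (ψ2 n))) ∈ C := fun n => hglimC _ (hqV (ψ2 n))
  obtain ⟨y0, hy0C, ψ3, hψ3, hy⟩ := hC.tendsto_subseq hyC
  -- final index
  set σ : ℕ → ℕ := fun n => ψ1 (ψ2 (ψ3 n)) with hσ_def
  have hσmono : StrictMono σ := hψ1.comp (hψ2.comp hψ3)
  have hqσ : Tendsto (fun n => q (σ n)) atTop (𝓝 q0) :=
    hq.comp (hψ2.comp hψ3).tendsto_atTop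
  have hxσ : Tendsto (fun n => gk (φ (σ n)) (q (σ n))) atTop (𝓝 x0) :=
    hx.comp hψ3.tendsto_atTop
  have hyσ : Tendsto (fun n => glim (q (σ n))) atTop (𝓝 y0) := hy
  have hm : Tendsto (fun n => φ (σ n)) atTop atTop :=
    (hφ.comp hσmono).tendsto_atTop
  have hfx0 : f x0 = q0 :=
    key (fun n => φ (σ n)) (fun n => gk (φ (σ n)) (q (σ n))) (fun n => q (σ n)) x0 q0
      hm (fun n => hCg _ ⟨q (σ n), hKV (hqK (σ n)), rfl⟩) hxσ
      (fun n => hgk _ _ (hKV (hqK (σ n)))) hqσ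
  have hfy0 : f y0 = q0 := by
    have h1 : Tendsto (fun n => f (glim (q (σ n)))) atTop (𝓝 (f y0)) :=
      (hf.tendsto y0).comp hyσ
    have h2 : Tendsto (fun n => f (glim (q (σ n)))) atTop (𝓝 q0) :=
      hqσ.congr (fun n => (hglim _ (hKV (hqK (σ n)))).symm)
    exact tendsto_nhds_unique h1 h2
  have hxy : x0 = y0 := hinj (hfx0.trans hfy0.symm)
  have hdist : Tendsto (fun n => dist (glim (q (σ n))) (gk (φ (σ n)) (q (σ n))))
      atTop (𝓝 0) := by
    simpa [hxy] using hyσ.dist hxσ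
  have hle : ε ≤ (0 : ℝ) :=
    ge_of_tendsto hdist (Eventually.of_forall (fun n => hqd (σ n)))
  linarith
end
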